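/- arXiv:1210.3126 — 5 statements merged into one kernel-verified Lean document; each statement's English description precedes it below -/
import Mathlib

section
/- Let G(x,y) = a₀ + a₁x + a₂y with (a₁,a₂) ≠ (0,0), and let V(x,y) = mL₀[(x+x⁰)² + (y+y⁰)²] + F(a₂x - a₁y) where F : ℝ → ℝ is differentiable and a₀ = a₁x⁰ + a₂y⁰. Then ∇V · ∇G = 2mL₀ G holds identically on ℝ². -/
/-- With `G = a₀ + a₁x + a₂y`, `(a₁,a₂) ≠ (0,0)`, `a₀ = a₁x⁰ + a₂y⁰`, and
`V = mL₀[(x+x⁰)² + (y+y⁰)²] + F(a₂x - a₁y)` for differentiable `F`,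
the compatibility equation `∇V · ∇G = 2mL₀G` holds identically on `ℝ²`. -/
theorem compatibility_E2 (m : ℕ) (hm : 0 < m) (L₀ x0 y0 a₀ a₁ a₂ : ℝ)
    (ha : (a₁, a₂) ≠ (0, 0)) (ha₀ : a₀ = a₁ * x0 + a₂ * y0)
    (F : ℝ → ℝ) (hF : Differentiable ℝ F)
    (V : ℝ → ℝ → ℝ)
    (hV : ∀ x y, V x y = (m : ℝ) * L₀ * ((x + x0) ^ 2 + (y + y0) ^ 2)
        + F (a₂ * x - a₁ * y)) :
    ∀ x y : ℝ,
      deriv (fun x' => V x' y) x * a₁ + deriv (fun y' => V x y') y * a₂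
        = 2 * (m : ℝ) * L₀ * (a₀ + a₁ * x + a₂ * y) := by
  intro x y
  have hx : HasDerivAt (fun x' => V x' y)
      ((m : ℝ) * L₀ * (2 * (x + x0)) + deriv F (a₂ * x - a₁ * y) * a₂) x := by
    have h1 : HasDerivAt (fun x' : ℝ => (m : ℝ) * L₀ * ((x' + x0) ^ 2 + (y + y0) ^ 2))
        ((m : ℝ) * L₀ * (2 * (x + x0))) x := by
      have := (((hasDerivAt_id x).add_const x0).pow 2).add_const ((y + y0) ^ 2)
      have := this.const_mul ((m : ℝ) * L₀)
      simpa using this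
    have h2 : HasDerivAt (fun x' : ℝ => F (a₂ * x' - a₁ * y))
        (deriv F (a₂ * x - a₁ * y) * a₂) x := by
      have hin : HasDerivAt (fun x' : ℝ => a₂ * x' - a₁ * y) a₂ x := by
        simpa using ((hasDerivAt_id x).const_mul a₂).sub_const (a₁ * y)
      exact ((hF (a₂ * x - a₁ * y)).hasDerivAt).comp x hin
    have := h1.add h2
    exact this.congr_of_eventuallyEq (by filter_upwards with z using (hV z y))
  have hy : HasDerivAt (fun y' => V x y')
      ((m : ℝ) * L₀ * (2 * (y + y0)) + deriv F (a₂ * x - a₁ * y) * (-a₁)) y := by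
    have h1 : HasDerivAt (fun y' : ℝ => (m : ℝ) * L₀ * ((x + x0) ^ 2 + (y' + y0) ^ 2))
        ((m : ℝ) * L₀ * (2 * (y + y0))) y := by
      have := ((((hasDerivAt_id y).add_const y0).pow 2).const_add ((x + x0) ^ 2)).const_mul
        ((m : ℝ) * L₀)
      simpa using this
    have h2 : HasDerivAt (fun y' : ℝ => F (a₂ * x - a₁ * y'))
        (deriv F (a₂ * x - a₁ * y) * (-a₁)) y := by
      have hin : HasDerivAt (fun y' : ℝ => a₂ * x - a₁ * y') (-a₁) y := by
        simpa using ((hasDerivAt_id y).const_mul a₁).const_sub (a₂ * x)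
      exact ((hF (a₂ * x - a₁ * y)).hasDerivAt).comp y hin
    have := h1.add h2
    exact this.congr_of_eventuallyEq (by filter_upwards with z using (hV x z))
  rw [hx.deriv, hy.deriv, ha₀]
  ring
end

section
/- Conversely, if V : ℝ² → ℝ is smooth, G(x,y) = a₀ + a₁x + a₂y with (a₁,a₂) ≠ (0,0), and ∇V · ∇G = 2mL₀G holds identically, then in rotated coordinates ξ = (a₁x+a₂y)/√(a₁²+a₂²), η = (a₂x-a₁y)/√(a₁²+a₂²), V has the form V = mL₀(ξ + ξ₀)² + F(η) for some constant ξ₀ with a₀ = √(a₁²+a₂²)·ξ₀ and some function F. -/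
/-- Converse compatibility: if smooth `V` satisfies `∇V · ∇G = 2mL₀G` with
`G = a₀ + a₁x + a₂y`, `(a₁,a₂) ≠ (0,0)`, then in the rotated coordinates
`ξ = (a₁x+a₂y)/√(a₁²+a₂²)`, `η = (a₂x-a₁y)/√(a₁²+a₂²)` the potential has the
form `V = mL₀(ξ + ξ₀)² + F(η)` with `a₀ = √(a₁²+a₂²)·ξ₀`. -/
theorem compatibility_E2_converse (m : ℕ) (hm : 0 < m) (L₀ a₀ a₁ a₂ : ℝ)
    (ha : (a₁, a₂) ≠ (0, 0))
    (V : ℝ → ℝ → ℝ) (hV : ContDiff ℝ (⊤ : ℕ∞) (fun p : ℝ × ℝ => V p.1 p.2))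
    (heq : ∀ x y : ℝ,
      deriv (fun x' => V x' y) x * a₁ + deriv (fun y' => V x y') y * a₂
        = 2 * (m : ℝ) * L₀ * (a₀ + a₁ * x + a₂ * y)) :
    ∃ (ξ₀ : ℝ) (F : ℝ → ℝ),
      a₀ = Real.sqrt (a₁ ^ 2 + a₂ ^ 2) * ξ₀ ∧
      ∀ x y : ℝ,
        V x y = (m : ℝ) * L₀ *
            ((a₁ * x + a₂ * y) / Real.sqrt (a₁ ^ 2 + a₂ ^ 2) + ξ₀) ^ 2
          + F ((a₂ * x - a₁ * y) / Real.sqrt (a₁ ^ 2 + a₂ ^ 2)) := by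
  set f : ℝ × ℝ → ℝ := fun p => V p.1 p.2 with hf
  have hdf : Differentiable ℝ f := hV.differentiable (by simp)
  have hpos : (0:ℝ) < a₁ ^ 2 + a₂ ^ 2 := by
    have : a₁ ≠ 0 ∨ a₂ ≠ 0 := by
      by_contra h
      push_neg at h
      exact ha (by simp [h.1, h.2])
    rcases this with h | h <;> positivity
  set r : ℝ := Real.sqrt (a₁ ^ 2 + a₂ ^ 2) with hrdef
  have hr : 0 < r := Real.sqrt_pos.2 hpos
  have hr2 : r ^ 2 = a₁ ^ 2 + a₂ ^ 2 := Real.sq_sqrt hpos.le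
  -- partial derivatives via fderiv
  have hpart : ∀ p : ℝ × ℝ, (fderiv ℝ f p) (a₁, a₂)
      = deriv (fun x' => V x' p.2) p.1 * a₁ + deriv (fun y' => V p.1 y') p.2 * a₂ := by
    intro p
    have h1 : HasDerivAt (fun x' => V x' p.2) ((fderiv ℝ f p) (1, 0)) p.1 := by
      have hc : HasDerivAt (fun x' : ℝ => ((x', p.2) : ℝ × ℝ)) ((1:ℝ), (0:ℝ)) p.1 :=
        (hasDerivAt_id p.1).prodMk (hasDerivAt_const p.1 p.2)
      have := (hdf p).hasFDerivAt.comp_hasDerivAt p.1 hc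
      simpa [f, Function.comp_def] using this
    have h2 : HasDerivAt (fun y' => V p.1 y') ((fderiv ℝ f p) (0, 1)) p.2 := by
      have hc : HasDerivAt (fun y' : ℝ => ((p.1, y') : ℝ × ℝ)) ((0:ℝ), (1:ℝ)) p.2 :=
        (hasDerivAt_const p.2 p.1).prodMk (hasDerivAt_id p.2)
      have := (hdf p).hasFDerivAt.comp_hasDerivAt p.2 hc
      simpa [f, Function.comp_def] using this
    have hv : ((a₁, a₂) : ℝ × ℝ) = a₁ • ((1:ℝ), (0:ℝ)) + a₂ • ((0:ℝ), (1:ℝ)) := by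
      simp [Prod.ext_iff]
    rw [hv, map_add, map_smul, map_smul, smul_eq_mul, smul_eq_mul,
      h1.deriv, h2.deriv]
    ring
  -- the shifted function W
  set ξ₀ : ℝ := a₀ / r with hxi
  have hrx : a₀ = r * ξ₀ := by rw [hxi, mul_div_assoc', mul_div_cancel_left₀ a₀ hr.ne']
  set W : ℝ → ℝ → ℝ := fun x y => V x y - (m:ℝ) * L₀ * ((a₁ * x + a₂ * y) / r + ξ₀) ^ 2 with hW
  -- W is constant along direction (a₁, a₂)
  have hconst : ∀ x y t : ℝ, W (x + t * a₁) (y + t * a₂) = W x y := by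
    intro x y t
    set φ : ℝ → ℝ := fun t => W (x + t * a₁) (y + t * a₂) with hφdef
    have hφ : ∀ s : ℝ, HasDerivAt φ 0 s := by
      intro s
      have hc : HasDerivAt (fun s : ℝ => ((x + s * a₁, y + s * a₂) : ℝ × ℝ)) (a₁, a₂) s := by
        have h1 : HasDerivAt (fun s : ℝ => x + s * a₁) a₁ s := by
          simpa using ((hasDerivAt_id s).mul_const a₁).const_add x
        have h2 : HasDerivAt (fun s : ℝ => y + s * a₂) a₂ s := by
          simpa using ((hasDerivAt_id s).mul_const a₂).const_add y
        exact h1.prodMk h2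
      have hV1 : HasDerivAt (fun s : ℝ => V (x + s * a₁) (y + s * a₂))
          ((fderiv ℝ f (x + s * a₁, y + s * a₂)) (a₁, a₂)) s := by
        have := (hdf _).hasFDerivAt.comp_hasDerivAt s hc
        simpa [f, Function.comp_def] using this
      set u : ℝ → ℝ := fun s => (a₁ * (x + s * a₁) + a₂ * (y + s * a₂)) / r + ξ₀ with hu
      have hu1 : HasDerivAt u ((a₁ ^ 2 + a₂ ^ 2) / r) s := by
        have : HasDerivAt (fun s : ℝ => (a₁ * (x + s * a₁) + a₂ * (y + s * a₂)) / r + ξ₀)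
            (((a₁ * a₁ + a₂ * a₂)) / r) s := by
          have h1 : HasDerivAt (fun s : ℝ => a₁ * (x + s * a₁) + a₂ * (y + s * a₂))
              (a₁ * a₁ + a₂ * a₂) s := by
            have ha1 : HasDerivAt (fun s : ℝ => a₁ * (x + s * a₁)) (a₁ * a₁) s := by
              simpa using (((hasDerivAt_id s).mul_const a₁).const_add x).const_mul a₁
            have ha2 : HasDerivAt (fun s : ℝ => a₂ * (y + s * a₂)) (a₂ * a₂) s := by
              simpa using (((hasDerivAt_id s).mul_const a₂).const_add y).const_mul a₂
            exact ha1.add ha2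
          exact (h1.div_const r).add_const ξ₀
        simpa [pow_two, u] using this
      have hu2 : HasDerivAt (fun s : ℝ => (m:ℝ) * L₀ * (u s) ^ 2)
          ((m:ℝ) * L₀ * (2 * u s * ((a₁ ^ 2 + a₂ ^ 2) / r))) s := by
        have := (hu1.fun_pow 2).const_mul ((m:ℝ) * L₀)
        exact this.congr_deriv (by ring)
      have hsum := hV1.sub hu2
      have hkey : (fderiv ℝ f (x + s * a₁, y + s * a₂)) (a₁, a₂)
          - (m:ℝ) * L₀ * (2 * u s * ((a₁ ^ 2 + a₂ ^ 2) / r)) = 0 := by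
        rw [hpart]
        simp only
        rw [heq (x + s * a₁) (y + s * a₂)]
        rw [← hr2]
        have : u s = (a₁ * (x + s * a₁) + a₂ * (y + s * a₂)) / r + a₀ / r := rfl
        rw [this]
        field_simp
        ring
      rw [hkey] at hsum
      exact hsum
    have hc := is_const_of_deriv_eq_zero (fun s => (hφ s).differentiableAt)
      (fun s => (hφ s).deriv) t 0
    simpa [φ] using hc
  refine ⟨ξ₀, fun η => V (a₂ * η / r) (-(a₁ * η) / r) - (m:ℝ) * L₀ * ξ₀ ^ 2, hrx, ?_⟩
  intro x y
  have hpt := hconst x y (-((a₁ * x + a₂ * y) / r ^ 2))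
  have hx' : x + (-((a₁ * x + a₂ * y) / r ^ 2)) * a₁ = a₂ * ((a₂ * x - a₁ * y) / r) / r := by
    rw [hr2]
    field_simp
    rw [hr2]
    ring
  have hy' : y + (-((a₁ * x + a₂ * y) / r ^ 2)) * a₂ = -(a₁ * ((a₂ * x - a₁ * y) / r)) / r := by
    rw [hr2]
    field_simp
    rw [hr2]
    ring
  rw [hx', hy'] at hpt
  have hzero : (a₁ * (a₂ * ((a₂ * x - a₁ * y) / r) / r) + a₂ * (-(a₁ * ((a₂ * x - a₁ * y) / r)) / r)) / r + ξ₀ = ξ₀ := by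
    field_simp
    ring
  simp only [W] at hpt
  rw [hzero] at hpt
  linarith [hpt]
end

section
/- On ℝⁿ with flat metric the general solution of the Hessian equation ∂ᵢ∂ⱼG = 0 for all i,j is the affine function G = a₀ + Σᵢ aᵢxᵢ, and for such G with the constraint a₀ = Σᵢ aᵢxᵢ⁰, the potential V = mL₀ Σᵢ(xᵢ + xᵢ⁰)² + F(a₁x₂ - a₂x₁, …, a₁xₙ - aₙx₁) satisfies ∇V · ∇G = 2mL₀G identically (where F is any differentiable function of its n-1 arguments). -/
open scoped BigOperators

private lemma clm_eval {n : ℕ} (f : (Fin n → ℝ) →L[ℝ] ℝ) (v : Fin n → ℝ) :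
    f v = ∑ i, v i * f (Pi.single i 1) := by
  conv_lhs => rw [← Finset.univ_sum_single v]
  rw [map_sum]
  refine Finset.sum_congr rfl fun i _ => ?_
  have h : (Pi.single i (v i) : Fin n → ℝ) = v i • (Pi.single i 1 : Fin n → ℝ) := by
    funext j
    by_cases hji : j = i <;> simp [Pi.single_apply, hji]
  rw [h, map_smul, smul_eq_mul]

/-- On flat `ℝⁿ` (`n = d + 2 ≥ 2`): (1) any smooth `G` with vanishing Hessian
is affine, `G = a₀ + Σᵢ aᵢ xᵢ`; (2) for affine `G` with `(a₁,…,aₙ) ≠ 0` and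
`a₀ = Σᵢ aᵢ xᵢ⁰`, the potential
`V = mL₀ Σᵢ (xᵢ + xᵢ⁰)² + F(a₁x₂ - a₂x₁, …, a₁xₙ - aₙx₁)` satisfies
`∇V · ∇G = 2mL₀ G` identically. -/
theorem flat_hessian_and_compatibility_En (d : ℕ) :
    (∀ G : (Fin (d + 2) → ℝ) → ℝ, ContDiff ℝ (⊤ : ℕ∞) G →
      (∀ (x : Fin (d + 2) → ℝ) (i j : Fin (d + 2)),
        fderiv ℝ (fun y => fderiv ℝ G y (Pi.single i 1)) x (Pi.single j 1) = 0) →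
      ∃ (a₀ : ℝ) (a : Fin (d + 2) → ℝ),
        ∀ x, G x = a₀ + ∑ i, a i * x i) ∧
    (∀ (m : ℕ), 0 < m → ∀ (L₀ : ℝ) (a x0 : Fin (d + 2) → ℝ), a ≠ 0 →
      ∀ (a₀ : ℝ), a₀ = ∑ i, a i * x0 i →
      ∀ F : (Fin (d + 1) → ℝ) → ℝ, Differentiable ℝ F →
      ∀ V : (Fin (d + 2) → ℝ) → ℝ,
      (∀ x, V x = (m : ℝ) * L₀ * ∑ i, (x i + x0 i) ^ 2
          + F (fun i : Fin (d + 1) => a 0 * x i.succ - a i.succ * x 0)) →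
      ∀ x, ∑ i, fderiv ℝ V x (Pi.single i 1) * a i
        = 2 * (m : ℝ) * L₀ * (a₀ + ∑ i, a i * x i)) := by
  constructor
  · intro G hG hHess
    have hdiff : Differentiable ℝ G := hG.differentiable (by simp)
    have hfd : ContDiff ℝ (⊤ : ℕ∞) (fderiv ℝ G) := hG.fderiv_right (by simp)
    -- each directional derivative is constant
    have hconst : ∀ i y, fderiv ℝ G y (Pi.single i 1) = fderiv ℝ G 0 (Pi.single i 1) := by
      intro i y
      have hdi : Differentiable ℝ (fun y => fderiv ℝ G y (Pi.single i 1)) :=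
        (hfd.differentiable (by simp)).clm_apply (differentiable_const _)
      have hz : ∀ x, fderiv ℝ (fun y => fderiv ℝ G y (Pi.single i 1)) x = 0 := by
        intro x
        ext v
        rw [clm_eval]
        simp [hHess x i]
      exact is_const_of_fderiv_eq_zero hdi hz y 0
    -- fderiv is globally constant
    have hfc : ∀ y, fderiv ℝ G y = fderiv ℝ G 0 := by
      intro y
      ext v
      rw [clm_eval, clm_eval (fderiv ℝ G 0)]
      exact Finset.sum_congr rfl fun i _ => by rw [hconst i y]
    refine ⟨G 0, fun i => fderiv ℝ G 0 (Pi.single i 1), fun x => ?_⟩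
    set L := fderiv ℝ G 0 with hL
    have hH : ∀ y, G y - L y = G 0 - L 0 := by
      intro y
      refine is_const_of_fderiv_eq_zero (fun z => (hdiff z).sub (L.differentiable z)) ?_ y 0
      intro z
      rw [fderiv_sub (hdiff z) (L.differentiable z), L.fderiv, hfc z, sub_self]
    have := hH x
    have hLx : L x = ∑ i, L (Pi.single i 1) * x i := by
      rw [clm_eval]
      exact Finset.sum_congr rfl fun i _ => mul_comm _ _
    simp only [map_zero, sub_zero] at this
    linarith [hLx ▸ this]
  · intro m hm L₀ a x0 ha a₀ ha₀ F hF V hV x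
    set c : ℝ := (m : ℝ) * L₀ with hc
    -- linear map for the arguments of F
    set L : (Fin (d + 2) → ℝ) →L[ℝ] (Fin (d + 1) → ℝ) :=
      ContinuousLinearMap.pi (fun i =>
        a 0 • ContinuousLinearMap.proj i.succ - a i.succ • ContinuousLinearMap.proj 0) with hLdef
    have hLapp : ∀ y i, L y i = a 0 * y i.succ - a i.succ * y 0 := by
      intro y i; simp [hLdef, smul_eq_mul]
    -- derivative of quadratic part
    have hQ : HasFDerivAt (fun y : Fin (d + 2) → ℝ => ∑ i, (y i + x0 i) ^ 2)
        (∑ i, (2 * (x i + x0 i)) • (ContinuousLinearMap.proj i :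
          (Fin (d + 2) → ℝ) →L[ℝ] ℝ)) x := by
      refine HasFDerivAt.fun_sum fun i _ => ?_
      have h1 : HasDerivAt (fun t : ℝ => (t + x0 i) ^ 2) (2 * (x i + x0 i)) (x i) := by
        have := ((hasDerivAt_id (x i)).add_const (x0 i)).fun_pow 2
        simpa [mul_comm] using this
      have h2 : HasFDerivAt (fun y : Fin (d + 2) → ℝ => y i)
          (ContinuousLinearMap.proj i : (Fin (d + 2) → ℝ) →L[ℝ] ℝ) x :=
        hasFDerivAt_apply i x
      simpa [Function.comp_def] using h1.comp_hasFDerivAt x h2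
    have hFL : HasFDerivAt (fun y => F (L y)) ((fderiv ℝ F (L x)).comp L) x :=
      ((hF (L x)).hasFDerivAt).comp x L.hasFDerivAt
    have hVeq : V = fun y => c * ∑ i, (y i + x0 i) ^ 2 + F (L y) := by
      funext y
      rw [hV y]
      have h : (fun i : Fin (d + 1) => a 0 * y i.succ - a i.succ * y 0) = L y :=
        funext fun i => (hLapp y i).symm
      rw [h]
    have hVd : HasFDerivAt V
        (c • (∑ i, (2 * (x i + x0 i)) • (ContinuousLinearMap.proj i :
          (Fin (d + 2) → ℝ) →L[ℝ] ℝ)) + (fderiv ℝ F (L x)).comp L) x := by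
      rw [hVeq]
      exact (hQ.const_smul c).add hFL
    have hfV := hVd.fderiv
    set K := (fderiv ℝ F (L x)).comp L with hK
    have hval : ∀ j, fderiv ℝ V x (Pi.single j 1)
        = c * (2 * (x j + x0 j)) + K (Pi.single j 1) := by
      intro j
      rw [hfV]
      simp only [ContinuousLinearMap.add_apply, ContinuousLinearMap.smul_apply,
        ContinuousLinearMap.sum_apply, ContinuousLinearMap.proj_apply, smul_eq_mul]
      congr 1
      rw [Finset.sum_eq_single j]
      · simp
      · intro b _ hb; simp [Pi.single_apply, hb]
      · intro h; exact absurd (Finset.mem_univ j) h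
    have hKsum : ∑ j, K (Pi.single j 1) * a j = 0 := by
      have h1 : ∑ j, K (Pi.single j 1) * a j = K a := by
        rw [clm_eval K a]
        exact Finset.sum_congr rfl fun j _ => mul_comm _ _
      rw [h1]
      have hLa : L a = 0 := by
        funext i
        rw [hLapp a i]
        ring_nf
        simp [mul_comm]
      simp [hK, ContinuousLinearMap.comp_apply, hLa]
    calc ∑ j, fderiv ℝ V x (Pi.single j 1) * a j
        = ∑ j, (c * (2 * (x j + x0 j)) * a j + K (Pi.single j 1) * a j) := by
          refine Finset.sum_congr rfl fun j _ => ?_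
          rw [hval j, add_mul]
      _ = ∑ j, c * (2 * (x j + x0 j)) * a j + ∑ j, K (Pi.single j 1) * a j :=
          Finset.sum_add_distrib
      _ = ∑ j, c * (2 * (x j + x0 j)) * a j := by rw [hKsum, add_zero]
      _ = 2 * c * (∑ j, a j * x0 j + ∑ j, a j * x j) := by
          rw [mul_add, Finset.mul_sum, Finset.mul_sum, ← Finset.sum_add_distrib]
          exact Finset.sum_congr rfl fun j _ => by ring
      _ = 2 * (m : ℝ) * L₀ * (a₀ + ∑ i, a i * x i) := by
          rw [ha₀, hc]; ring
end

section
/- For the extended Calogero Hamiltonian H = ½p_u² + mA(L) + mL₀A²u² with L = ½(p₁²+p₂²+p₃²) + mL₀[(x₁+x⁰₁)²+(x₂+x⁰₂)²+(x₃+x⁰₃)²] + k Σ_{i<j}(xᵢ-xⱼ)⁻², the quantity U²G = G p_u² - 2Au p_u P - 4A²L₀ G u², where G = x⁰₁+x⁰₂+x⁰₃+x₁+x₂+x₃ and P = p₁+p₂+p₃, Poisson-commutes with H. -/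
/-! All terms of `{H, U²G}` cancel except `-4A²k u p_u (∂₁V + ∂₂V + ∂₃V)`, where
`V = Σ (xᵢ - xⱼ)⁻²` is the Calogero potential. That derivative of `V` along `(1, 1, 1)` vanishes
because `V` is invariant under every translation that moves `x₁, x₂, x₃` together; the same
invariance shows `∂ᵤV = 0`. -/

open scoped BigOperators

/-- Canonical Poisson bracket on `T*ℝ⁴` with coordinates
`q = (u,x₁,x₂,x₃)` and momenta `p = (p_u,p₁,p₂,p₃)`. -/
noncomputable def pb4 (f g : (Fin 4 → ℝ) → (Fin 4 → ℝ) → ℝ)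
    (q p : Fin 4 → ℝ) : ℝ :=
  ∑ i : Fin 4,
    (fderiv ℝ (fun q' => f q' p) q (Pi.single i 1) *
        fderiv ℝ (fun p' => g q p') p (Pi.single i 1)
      - fderiv ℝ (fun p' => f q p') p (Pi.single i 1) *
        fderiv ℝ (fun q' => g q' p) q (Pi.single i 1))

theorem pb4_eq_of_hasFDerivAt {f g : (Fin 4 → ℝ) → (Fin 4 → ℝ) → ℝ} {q p : Fin 4 → ℝ}
    {fq fp gq gp : (Fin 4 → ℝ) →L[ℝ] ℝ}
    (hfq : HasFDerivAt (fun q' => f q' p) fq q) (hfp : HasFDerivAt (fun p' => f q p') fp p)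
    (hgq : HasFDerivAt (fun q' => g q' p) gq q) (hgp : HasFDerivAt (fun p' => g q p') gp p) :
    pb4 f g q p = ∑ i : Fin 4,
      (fq (Pi.single i 1) * gp (Pi.single i 1) - fp (Pi.single i 1) * gq (Pi.single i 1)) := by
  simp only [pb4, hfq.fderiv, hfp.fderiv, hgq.fderiv, hgp.fderiv]

theorem fderiv_apply_eq_zero_of_forall_add_smul {𝕜 E F : Type*} [NontriviallyNormedField 𝕜]
    [NormedAddCommGroup E] [NormedSpace 𝕜 E] [NormedAddCommGroup F] [NormedSpace 𝕜 F]
    {f : E → F} {x v : E} (hf : DifferentiableAt 𝕜 f x) (h : ∀ t : 𝕜, f (x + t • v) = f x) :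
    fderiv 𝕜 f x v = 0 := by
  rw [← hf.lineDeriv_eq_fderiv, lineDeriv, funext h, deriv_const]

noncomputable def calogeroPotential (x : Fin 4 → ℝ) : ℝ :=
  (x 1 - x 2)⁻¹ ^ 2 + (x 1 - x 3)⁻¹ ^ 2 + (x 2 - x 3)⁻¹ ^ 2

theorem calogeroPotential_add_smul {v : Fin 4 → ℝ} (hv12 : v 1 = v 2) (hv13 : v 1 = v 3)
    (x : Fin 4 → ℝ) (t : ℝ) : calogeroPotential (x + t • v) = calogeroPotential x := by
  simp only [calogeroPotential, Pi.add_apply, Pi.smul_apply, smul_eq_mul, ← hv12, ← hv13]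
  ring_nf

theorem differentiableAt_calogeroPotential {x : Fin 4 → ℝ}
    (h12 : x 1 ≠ x 2) (h13 : x 1 ≠ x 3) (h23 : x 2 ≠ x 3) :
    DifferentiableAt ℝ calogeroPotential x := by
  unfold calogeroPotential
  fun_prop (disch := simp [sub_ne_zero, *])

theorem fderiv_calogeroPotential_apply_eq_zero {x v : Fin 4 → ℝ}
    (h12 : x 1 ≠ x 2) (h13 : x 1 ≠ x 3) (h23 : x 2 ≠ x 3) (hv12 : v 1 = v 2) (hv13 : v 1 = v 3) :
    fderiv ℝ calogeroPotential x v = 0 :=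
  fderiv_apply_eq_zero_of_forall_add_smul (differentiableAt_calogeroPotential h12 h13 h23)
    (calogeroPotential_add_smul hv12 hv13 x)

noncomputable def extendedCalogeroHamiltonian (A L₀ k x01 x02 x03 : ℝ) (q p : Fin 4 → ℝ) : ℝ :=
  (1 / 2) * p 0 ^ 2
    + 2 * A * ((1 / 2) * (p 1 ^ 2 + p 2 ^ 2 + p 3 ^ 2)
      + 2 * L₀ * ((q 1 + x01) ^ 2 + (q 2 + x02) ^ 2 + (q 3 + x03) ^ 2) + k * calogeroPotential q)
    + 2 * L₀ * A ^ 2 * q 0 ^ 2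

noncomputable def extendedCalogeroIntegral (A L₀ x01 x02 x03 : ℝ) (q p : Fin 4 → ℝ) : ℝ :=
  (x01 + x02 + x03 + q 1 + q 2 + q 3) * p 0 ^ 2
    - 2 * A * q 0 * p 0 * (p 1 + p 2 + p 3)
    - 4 * A ^ 2 * L₀ * (x01 + x02 + x03 + q 1 + q 2 + q 3) * q 0 ^ 2

abbrev coord (i : Fin 4) : (Fin 4 → ℝ) →L[ℝ] ℝ := ContinuousLinearMap.proj i

section Gradients

variable (A L₀ k x01 x02 x03 : ℝ) (q p : Fin 4 → ℝ)

theorem hasFDerivAt_sq_coord (i : Fin 4) :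
    HasFDerivAt (fun y : Fin 4 → ℝ => y i ^ 2) ((2 * q i) • coord i) q := by
  simpa using (hasFDerivAt_apply (𝕜 := ℝ) i q).pow 2

theorem hasFDerivAt_sq_coord_add (i : Fin 4) (c : ℝ) :
    HasFDerivAt (fun y : Fin 4 → ℝ => (y i + c) ^ 2) ((2 * (q i + c)) • coord i) q := by
  simpa [mul_add] using ((hasFDerivAt_apply (𝕜 := ℝ) i q).add_const c).pow 2

theorem hasFDerivAt_extendedCalogeroHamiltonian_q
    (h12 : q 1 ≠ q 2) (h13 : q 1 ≠ q 3) (h23 : q 2 ≠ q 3) :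
    HasFDerivAt (fun q' => extendedCalogeroHamiltonian A L₀ k x01 x02 x03 q' p)
      ((4 * L₀ * A ^ 2 * q 0) • coord 0
        + (2 * A) • ((4 * L₀) • ((q 1 + x01) • coord 1 + (q 2 + x02) • coord 2
            + (q 3 + x03) • coord 3) + k • fderiv ℝ calogeroPotential q)) q := by
  have hV := (differentiableAt_calogeroPotential h12 h13 h23).hasFDerivAt
  have := ((((((hasFDerivAt_sq_coord_add q 1 x01).add (hasFDerivAt_sq_coord_add q 2 x02)).add
    (hasFDerivAt_sq_coord_add q 3 x03)).const_mul (2 * L₀)).const_add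
      ((1 / 2) * (p 1 ^ 2 + p 2 ^ 2 + p 3 ^ 2))).add (hV.const_mul k)).const_mul (2 * A)
    |>.const_add ((1 / 2) * p 0 ^ 2) |>.add ((hasFDerivAt_sq_coord q 0).const_mul (2 * L₀ * A ^ 2))
  refine this.congr_fderiv ?_
  ext v
  simp only [smul_add, add_apply, smul_apply, ContinuousLinearMap.proj_apply, smul_eq_mul]
  ring

theorem hasFDerivAt_extendedCalogeroHamiltonian_p :
    HasFDerivAt (fun p' => extendedCalogeroHamiltonian A L₀ k x01 x02 x03 q p')
      (p 0 • coord 0 + (2 * A) • (p 1 • coord 1 + p 2 • coord 2 + p 3 • coord 3)) p := by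
  have := ((hasFDerivAt_sq_coord p 0).const_mul (1 / 2)).add
    (((((((hasFDerivAt_sq_coord p 1).add (hasFDerivAt_sq_coord p 2)).add
      (hasFDerivAt_sq_coord p 3)).const_mul (1 / 2)).add_const
        (2 * L₀ * ((q 1 + x01) ^ 2 + (q 2 + x02) ^ 2 + (q 3 + x03) ^ 2))).add_const
          (k * calogeroPotential q)).const_mul (2 * A)) |>.add_const (2 * L₀ * A ^ 2 * q 0 ^ 2)
  refine this.congr_fderiv ?_
  ext v
  simp only [smul_add, add_apply, smul_apply, ContinuousLinearMap.proj_apply, smul_eq_mul]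
  ring

theorem hasFDerivAt_shifted_coord_sum :
    HasFDerivAt (fun y : Fin 4 → ℝ => x01 + x02 + x03 + y 1 + y 2 + y 3)
      (coord 1 + coord 2 + coord 3) q :=
  (((hasFDerivAt_apply (𝕜 := ℝ) 1 q).const_add (x01 + x02 + x03)).add
    (hasFDerivAt_apply (𝕜 := ℝ) 2 q)).add (hasFDerivAt_apply (𝕜 := ℝ) 3 q)

theorem hasFDerivAt_extendedCalogeroIntegral_q :
    HasFDerivAt (fun q' => extendedCalogeroIntegral A L₀ x01 x02 x03 q' p)
      ((p 0 ^ 2 - 4 * A ^ 2 * L₀ * q 0 ^ 2) • (coord 1 + coord 2 + coord 3)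
        - (2 * A * p 0 * (p 1 + p 2 + p 3)
          + 8 * A ^ 2 * L₀ * (x01 + x02 + x03 + q 1 + q 2 + q 3) * q 0) • coord 0) q := by
  have hG := hasFDerivAt_shifted_coord_sum x01 x02 x03 q
  have := ((hG.mul_const (p 0 ^ 2)).sub
    ((((hasFDerivAt_apply (𝕜 := ℝ) 0 q).const_mul (2 * A)).mul_const (p 0)).mul_const
      (p 1 + p 2 + p 3))).sub ((hG.const_mul (4 * A ^ 2 * L₀)).mul (hasFDerivAt_sq_coord q 0))
  refine this.congr_fderiv ?_
  ext v
  simp only [smul_add, sub_apply, add_apply, smul_apply, ContinuousLinearMap.proj_apply,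
    smul_eq_mul]
  ring

theorem hasFDerivAt_extendedCalogeroIntegral_p :
    HasFDerivAt (fun p' => extendedCalogeroIntegral A L₀ x01 x02 x03 q p')
      ((2 * (x01 + x02 + x03 + q 1 + q 2 + q 3) * p 0 - 2 * A * q 0 * (p 1 + p 2 + p 3)) • coord 0
        - (2 * A * q 0 * p 0) • (coord 1 + coord 2 + coord 3)) p := by
  have := (((hasFDerivAt_sq_coord p 0).const_mul (x01 + x02 + x03 + q 1 + q 2 + q 3)).sub
    (((hasFDerivAt_apply (𝕜 := ℝ) 0 p).const_mul (2 * A * q 0)).mul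
      (((hasFDerivAt_apply (𝕜 := ℝ) 1 p).add
        (hasFDerivAt_apply (𝕜 := ℝ) 2 p)).add (hasFDerivAt_apply (𝕜 := ℝ) 3 p)))).sub_const
    (4 * A ^ 2 * L₀ * (x01 + x02 + x03 + q 1 + q 2 + q 3) * q 0 ^ 2)
  refine this.congr_fderiv ?_
  ext v
  simp only [smul_add, Pi.add_apply, sub_apply, add_apply, smul_apply,
    ContinuousLinearMap.proj_apply, smul_eq_mul]
  ring

end Gradients

theorem pb4_extendedCalogeroHamiltonian_extendedCalogeroIntegral (A L₀ k x01 x02 x03 : ℝ)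
    {q : Fin 4 → ℝ} (p : Fin 4 → ℝ) (h12 : q 1 ≠ q 2) (h13 : q 1 ≠ q 3) (h23 : q 2 ≠ q 3) :
    pb4 (extendedCalogeroHamiltonian A L₀ k x01 x02 x03) (extendedCalogeroIntegral A L₀ x01 x02 x03)
      q p = 0 := by
  rw [pb4_eq_of_hasFDerivAt
    (hasFDerivAt_extendedCalogeroHamiltonian_q A L₀ k x01 x02 x03 q p h12 h13 h23)
    (hasFDerivAt_extendedCalogeroHamiltonian_p A L₀ k x01 x02 x03 q p)
    (hasFDerivAt_extendedCalogeroIntegral_q A L₀ x01 x02 x03 q p)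
    (hasFDerivAt_extendedCalogeroIntegral_p A L₀ x01 x02 x03 q p)]
  have hV₀ : fderiv ℝ calogeroPotential q (Pi.single 0 1) = 0 :=
    fderiv_calogeroPotential_apply_eq_zero h12 h13 h23 (by simp) (by simp)
  have hV₁₂₃ : fderiv ℝ calogeroPotential q (Pi.single 1 1 + Pi.single 2 1 + Pi.single 3 1) = 0 :=
    fderiv_calogeroPotential_apply_eq_zero h12 h13 h23 (by simp) (by simp)
  simp only [map_add] at hV₁₂₃
  simp only [Fin.sum_univ_four, smul_add, add_apply, sub_apply, smul_apply,
    ContinuousLinearMap.proj_apply, Pi.single_apply, Fin.reduceEq, ↓reduceIte, smul_eq_mul, hV₀]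
  linear_combination (-4 * A ^ 2 * k * q 0 * p 0) * hV₁₂₃

theorem calogero_extension_m2_general (A L₀ k x01 x02 x03 : ℝ)
    (L H F : (Fin 4 → ℝ) → (Fin 4 → ℝ) → ℝ)
    (hL : ∀ q p, L q p =
      (1 / 2) * ((p 1) ^ 2 + (p 2) ^ 2 + (p 3) ^ 2)
        + 2 * L₀ * ((q 1 + x01) ^ 2 + (q 2 + x02) ^ 2 + (q 3 + x03) ^ 2)
        + k * ((q 1 - q 2)⁻¹ ^ 2 + (q 1 - q 3)⁻¹ ^ 2 + (q 2 - q 3)⁻¹ ^ 2))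
    (hH : ∀ q p, H q p =
      (1 / 2) * (p 0) ^ 2 + 2 * A * L q p + 2 * L₀ * A ^ 2 * (q 0) ^ 2)
    (hF : ∀ q p, F q p =
      (x01 + x02 + x03 + q 1 + q 2 + q 3) * (p 0) ^ 2
        - 2 * A * q 0 * p 0 * (p 1 + p 2 + p 3)
        - 4 * A ^ 2 * L₀ * (x01 + x02 + x03 + q 1 + q 2 + q 3) * (q 0) ^ 2) :
    ∀ q p : Fin 4 → ℝ, q 1 ≠ q 2 → q 1 ≠ q 3 → q 2 ≠ q 3 →
      pb4 H F q p = 0 := by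
  obtain rfl : H = extendedCalogeroHamiltonian A L₀ k x01 x02 x03 := by
    funext q p
    rw [hH, hL]
    rfl
  obtain rfl : F = extendedCalogeroIntegral A L₀ x01 x02 x03 := funext₂ hF
  intro q p h12 h13 h23
  exact pb4_extendedCalogeroHamiltonian_extendedCalogeroIntegral A L₀ k x01 x02 x03 p h12 h13 h23

/-- For the extended three-body Calogero Hamiltonian with `m = 2`,
`H = ½p_u² + 2A·L + 2L₀A²u²`, the quadratic quantity
`U²G = G p_u² - 2Au p_u P - 4A²L₀ G u²` Poisson-commutes with `H` on the region
where the `xᵢ` are pairwise distinct. -/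
theorem calogero_extension_m2 (A L₀ k x01 x02 x03 : ℝ) (hA : A ≠ 0)
    (L H F : (Fin 4 → ℝ) → (Fin 4 → ℝ) → ℝ)
    (hL : ∀ q p, L q p =
      (1 / 2) * ((p 1) ^ 2 + (p 2) ^ 2 + (p 3) ^ 2)
        + 2 * L₀ * ((q 1 + x01) ^ 2 + (q 2 + x02) ^ 2 + (q 3 + x03) ^ 2)
        + k * ((q 1 - q 2)⁻¹ ^ 2 + (q 1 - q 3)⁻¹ ^ 2 + (q 2 - q 3)⁻¹ ^ 2))
    (hH : ∀ q p, H q p =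
      (1 / 2) * (p 0) ^ 2 + 2 * A * L q p + 2 * L₀ * A ^ 2 * (q 0) ^ 2)
    (hF : ∀ q p, F q p =
      (x01 + x02 + x03 + q 1 + q 2 + q 3) * (p 0) ^ 2
        - 2 * A * q 0 * p 0 * (p 1 + p 2 + p 3)
        - 4 * A ^ 2 * L₀ * (x01 + x02 + x03 + q 1 + q 2 + q 3) * (q 0) ^ 2) :
    ∀ q p : Fin 4 → ℝ, q 1 ≠ q 2 → q 1 ≠ q 3 → q 2 ≠ q 3 →
      pb4 H F q p = 0 :=
  calogero_extension_m2_general A L₀ k x01 x02 x03 L H F hL hH hF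
end

section
/- On S², the potential V = (1/sin²θ)(α₁/sin²φ + α₂/cos²φ) and the function G = cos θ satisfy ∂_θV ∂_θG + (1/sin²θ) ∂_φV ∂_φG = 2VG wherever sin θ, sin φ, cos φ are nonzero. -/
open Real

/-! Only the `θ`-derivative term survives, since `G` does not depend on `φ`; and
`d/dθ (1 / sin²θ) = -2 cos θ / sin³θ`, so multiplying by `∂θG = -sin θ` gives `2 cos θ / sin²θ`. -/

lemma hasDerivAt_one_div_sin_sq {θ : ℝ} (hθ : sin θ ≠ 0) :
    HasDerivAt (fun t => 1 / sin t ^ 2) (-2 * cos θ / sin θ ^ 3) θ := by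
  refine ((hasDerivAt_const θ (1 : ℝ)).fun_div ((hasDerivAt_sin θ).fun_pow 2)
    (pow_ne_zero 2 hθ)).congr_deriv ?_
  field_simp
  ring

/-- On `S²`, the potential `V = (1/sin²θ)(α₁/sin²φ + α₂/cos²φ)` and `G = cos θ`
satisfy the compatibility equation
`∂θV ∂θG + (1/sin²θ) ∂φV ∂φG = 2VG` wherever `sin θ`, `sin φ`, `cos φ ≠ 0`. -/
theorem S9vi_compatibility (α₁ α₂ : ℝ) (V G : ℝ → ℝ → ℝ)
    (hV : ∀ θ φ, V θ φ = (1 / (Real.sin θ) ^ 2) *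
        (α₁ / (Real.sin φ) ^ 2 + α₂ / (Real.cos φ) ^ 2))
    (hG : ∀ θ φ, G θ φ = Real.cos θ) :
    ∀ θ φ : ℝ, Real.sin θ ≠ 0 → Real.sin φ ≠ 0 → Real.cos φ ≠ 0 →
      deriv (fun t => V t φ) θ * deriv (fun t => G t φ) θ
        + (1 / (Real.sin θ) ^ 2) * deriv (fun s => V θ s) φ *
            deriv (fun s => G θ s) φ
        = 2 * V θ φ * G θ φ := by
  intro θ φ hθ _ _
  have hVθ : deriv (fun t => V t φ) θ =
      -2 * cos θ / sin θ ^ 3 * (α₁ / sin φ ^ 2 + α₂ / cos φ ^ 2) := by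
    simp only [hV]
    exact ((hasDerivAt_one_div_sin_sq hθ).mul_const _).deriv
  have hGθ : deriv (fun t => G t φ) θ = -sin θ := by
    simp only [hG]
    exact (hasDerivAt_cos θ).deriv
  have hGφ : deriv (fun s => G θ s) φ = 0 := by
    simp only [hG]
    exact deriv_const φ (cos θ)
  rw [hVθ, hGθ, hGφ, hV, hG]
  field_simp
  ring
end
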